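/- Let K ≥ 1, let r₁, …, r_n ∈ ℝ^K, let R̂ := (1/n) ∑_{i=1}^n δ_{r_i}, let α ∈ (0,1), ε ≥ 0, and w ∈ ℝ^K. For a Borel probability measure μ on ℝ^K with finite first moment define CVaR_α^μ(w) := inf_{η ∈ ℝ} { η + (1/α) ∫ max(−⟨r,w⟩ − η, 0) dμ(r) }. Then the supremum, over all Borel probability measures R on ℝ^K with finite first moment satisfying W₁(R, R̂) ≤ ε, of CVaR_α^R(w), equals CVaR_α^{R̂}(w) + (ε/α)‖w‖, where ‖·‖ and ⟨·,·⟩ are the Euclidean norm and inner product. -/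

import Mathlib

open MeasureTheory ENNReal

noncomputable section

/-- A coupling of two measures: a measure on the product whose marginals are the given
measures. -/
def IsCoupling {X Y : Type*} [MeasurableSpace X] [MeasurableSpace Y]
    (π : Measure (X × Y)) (μ : Measure X) (ν : Measure Y) : Prop :=
  π.map Prod.fst = μ ∧ π.map Prod.snd = ν

/-- The 1-Wasserstein distance (as an extended nonnegative real). -/
noncomputable def W1 {X : Type*} [MeasurableSpace X] [PseudoEMetricSpace X]
    (μ ν : Measure X) : ℝ≥0∞ :=
  ⨅ (π : Measure (X × X)) (_ : IsCoupling π μ ν), ∫⁻ p, edist p.1 p.2 ∂π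

/-- The empirical measure of the sample `r₁, …, r_n`. -/
noncomputable def empiricalMeasure {K : ℕ} (n : ℕ) (r : Fin n → EuclideanSpace ℝ (Fin K)) :
    Measure (EuclideanSpace ℝ (Fin K)) :=
  (n : ℝ≥0∞)⁻¹ • ∑ i : Fin n, Measure.dirac (r i)

/-- Conditional value-at-risk at level `α` of the linear loss `r ↦ −⟨r,w⟩` under `μ`,
in its Rockafellar–Uryasev infimal representation. -/
noncomputable def CVaR {K : ℕ} (α : ℝ) (μ : Measure (EuclideanSpace ℝ (Fin K)))
    (w : EuclideanSpace ℝ (Fin K)) : ℝ :=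
  ⨅ η : ℝ, (η + (1 / α) * ∫ x, max (-(inner ℝ x w : ℝ) - η) 0 ∂μ)

/-! Both sides are Rockafellar–Uryasev infima over `η`, and for each `η` the integrand
`x ↦ max (-⟪x, w⟫ - η) 0` is `‖w‖`-Lipschitz. Integrating the Lipschitz bound against a
near-optimal coupling shows that passing from `R̂` to any `R` with `W₁(R, R̂) ≤ ε` raises the
objective by at most `ε ‖w‖ / α`. The bound is attained: move mass `β = min(α, 1/n)` from the
sample point `q` of largest loss a distance `ε / β` in the direction `-w`, raising the loss there
by `ε ‖w‖ / β`. For `η` below the loss at `q` the objective rises by exactly `ε ‖w‖ / α`. For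
larger `η` the new objective is at least `loss(q) + ε ‖w‖ / α` because `β ≤ α`, while the
empirical CVaR is at most its objective at `η = loss(q)`, which is `loss(q)`.
-/

open scoped NNReal

section LossCVaR

variable {X : Type*} [MeasurableSpace X]

def cvarObjective (α : ℝ) (μ : Measure X) (g : X → ℝ) (η : ℝ) : ℝ :=
  η + (1 / α) * ∫ x, max (g x - η) 0 ∂μ

def lossCVaR (α : ℝ) (μ : Measure X) (g : X → ℝ) : ℝ :=
  ⨅ η, cvarObjective α μ g η

theorem CVaR_eq_lossCVaR {K : ℕ} (α : ℝ) (μ : Measure (EuclideanSpace ℝ (Fin K)))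
    (w : EuclideanSpace ℝ (Fin K)) : CVaR α μ w = lossCVaR α μ (fun x => -inner ℝ x w) :=
  rfl

variable {α : ℝ} {μ : Measure X} {g : X → ℝ}

theorem integral_le_cvarObjective (hα0 : 0 < α) (hα1 : α ≤ 1) [IsProbabilityMeasure μ]
    (hg : Integrable g μ) (η : ℝ) : ∫ x, g x ∂μ ≤ cvarObjective α μ g η := by
  have hpos : 0 ≤ ∫ x, max (g x - η) 0 ∂μ := integral_nonneg fun x => le_max_right _ _
  calc ∫ x, g x ∂μ = η + ∫ x, (g x - η) ∂μ := by
        rw [integral_sub hg (integrable_const η)]; simp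
    _ ≤ η + ∫ x, max (g x - η) 0 ∂μ := by
        have hgη : Integrable (fun x => g x - η) μ := hg.sub (integrable_const η)
        linarith [integral_mono hgη hgη.pos_part fun x => le_max_left _ _]
    _ ≤ cvarObjective α μ g η := by
        unfold cvarObjective
        gcongr
        exact le_mul_of_one_le_left hpos (one_le_one_div hα0 hα1)

theorem lossCVaR_le_cvarObjective (hα0 : 0 < α) (hα1 : α ≤ 1) [IsProbabilityMeasure μ]
    (hg : Integrable g μ) (η : ℝ) : lossCVaR α μ g ≤ cvarObjective α μ g η :=
  ciInf_le ⟨_, Set.forall_mem_range.2 (integral_le_cvarObjective hα0 hα1 hg)⟩ η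

end LossCVaR

section Transport

variable {X : Type*} [PseudoMetricSpace X] [MeasurableSpace X] [BorelSpace X]
  [SecondCountableTopology X] {μ ν : Measure X} {f : X → ℝ} {L : ℝ≥0}

theorem integral_le_integral_add_of_isCoupling {π : Measure (X × X)} (hπ : IsCoupling π μ ν)
    (hf : LipschitzWith L f) (hμ : Integrable f μ) (hν : Integrable f ν) {c : ℝ} (hc : 0 ≤ c)
    (hcost : ∫⁻ p, edist p.1 p.2 ∂π ≤ ENNReal.ofReal c) :
    ∫ x, f x ∂μ ≤ ∫ x, f x ∂ν + L * c := by
  have hdist_meas : AEStronglyMeasurable (fun p : X × X => dist p.1 p.2) π :=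
    (continuous_fst.dist continuous_snd).aestronglyMeasurable
  have hdist_int : Integrable (fun p : X × X => dist p.1 p.2) π := by
    refine ⟨hdist_meas, (hasFiniteIntegral_iff_ofReal (ae_of_all _ fun _ => dist_nonneg)).2 ?_⟩
    simp_rw [← edist_dist]
    exact hcost.trans_lt ofReal_lt_top
  have hdist_le : ∫ p, dist p.1 p.2 ∂π ≤ c := by
    rw [integral_eq_lintegral_of_nonneg_ae (ae_of_all _ fun _ => dist_nonneg) hdist_meas]
    simp_rw [← edist_dist]
    exact ENNReal.toReal_le_of_le_ofReal hc hcost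
  have hfst : Integrable (fun p : X × X => f p.1) π := by
    rw [← hπ.1] at hμ; exact hμ.comp_measurable measurable_fst
  have hsnd : Integrable (fun p : X × X => f p.2) π := by
    rw [← hπ.2] at hν; exact hν.comp_measurable measurable_snd
  have hpt : ∀ p : X × X, f p.1 ≤ f p.2 + L * dist p.1 p.2 := fun p => by
    linarith [(abs_sub_le_iff.1 (Real.dist_eq _ _ ▸ hf.dist_le_mul p.1 p.2)).1]
  calc ∫ x, f x ∂μ = ∫ p, f p.1 ∂π := by
        rw [← hπ.1, integral_map measurable_fst.aemeasurable hf.continuous.aestronglyMeasurable]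
    _ ≤ ∫ p, (f p.2 + L * dist p.1 p.2) ∂π :=
        integral_mono hfst (hsnd.add (hdist_int.const_mul _)) hpt
    _ = ∫ x, f x ∂ν + L * ∫ p, dist p.1 p.2 ∂π := by
        rw [integral_add hsnd (hdist_int.const_mul _), integral_const_mul, ← hπ.2,
          integral_map measurable_snd.aemeasurable hf.continuous.aestronglyMeasurable]
    _ ≤ ∫ x, f x ∂ν + L * c := by gcongr

theorem integral_le_integral_add_of_W1_le (hf : LipschitzWith L f) (hμ : Integrable f μ)
    (hν : Integrable f ν) {ε : ℝ} (hε : 0 ≤ ε) (hW : W1 μ ν ≤ ENNReal.ofReal ε) :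
    ∫ x, f x ∂μ ≤ ∫ x, f x ∂ν + L * ε := by
  have hc : ∀ c > ε, ∫ x, f x ∂μ ≤ ∫ x, f x ∂ν + L * c := fun c hc => by
    have hlt : W1 μ ν < ENNReal.ofReal c :=
      hW.trans_lt ((ENNReal.ofReal_lt_ofReal_iff (hε.trans_lt hc)).2 hc)
    obtain ⟨π, hπ, hcost⟩ :
        ∃ π, IsCoupling π μ ν ∧ ∫⁻ p, edist p.1 p.2 ∂π < ENNReal.ofReal c := by
      simpa only [W1, iInf_lt_iff, exists_prop] using hlt
    exact integral_le_integral_add_of_isCoupling hπ hf hμ hν (hε.trans hc.le) hcost.le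
  have hcont : Continuous fun c : ℝ => ∫ x, f x ∂ν + L * c := by fun_prop
  exact ge_of_tendsto (hcont.continuousWithinAt (s := Set.Ioi ε) (x := ε))
    (eventually_nhdsWithin_of_forall hc)

theorem lossCVaR_le_add_of_W1_le {α : ℝ} (hα0 : 0 < α) (hα1 : α ≤ 1) [IsProbabilityMeasure μ]
    [IsFiniteMeasure ν] (hf : LipschitzWith L f) (hμ : Integrable f μ)
    (hν : Integrable f ν) {ε : ℝ} (hε : 0 ≤ ε) (hW : W1 μ ν ≤ ENNReal.ofReal ε) :
    lossCVaR α μ f ≤ lossCVaR α ν f + ε / α * L := by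
  rw [← sub_le_iff_le_add]
  refine le_ciInf fun η => ?_
  have hfη : LipschitzWith L fun x => max (f x - η) 0 := by
    simpa using (hf.sub (LipschitzWith.const η)).max_const 0
  have hshift := integral_le_integral_add_of_W1_le hfη
    (hμ.sub (integrable_const η)).pos_part (hν.sub (integrable_const η)).pos_part hε hW
  have hα : 0 ≤ 1 / α := by positivity
  calc lossCVaR α μ f - ε / α * L ≤ cvarObjective α μ f η - 1 / α * (L * ε) := by
        rw [show ε / α * L = 1 / α * (L * ε) by ring]
        gcongr
        exact lossCVaR_le_cvarObjective hα0 hα1 hμ η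
    _ ≤ cvarObjective α ν f η := by
        unfold cvarObjective
        nlinarith [mul_le_mul_of_nonneg_left hshift hα]

end Transport

section MoveAtom

variable {X : Type*} [MeasurableSpace X]

theorem isProbabilityMeasure_add_smul_dirac {ν : Measure X} {β : ℝ≥0} {q : X} (p : X)
    [IsProbabilityMeasure (ν + β • Measure.dirac q)] :
    IsProbabilityMeasure (ν + β • Measure.dirac p) := by
  constructor
  rw [← measure_univ (μ := ν + β • Measure.dirac q)]
  simp only [Measure.add_apply, Measure.smul_apply, Measure.dirac_apply_of_mem (Set.mem_univ _)]

variable [MeasurableSingletonClass X]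

theorem exists_eq_add_smul_dirac {μ : Measure X} {β : ℝ≥0} {q : X}
    (hβ : (β : ℝ≥0∞) ≤ μ {q}) :
    ∃ ν : Measure X, μ = ν + β • Measure.dirac q := by
  refine ⟨μ - β • Measure.dirac q, (Measure.sub_add_cancel_of_le fun s => ?_).symm⟩
  by_cases hs : q ∈ s
  · simpa [hs] using hβ.trans (measure_mono (Set.singleton_subset_iff.2 hs))
  · simp [hs]

theorem W1_add_smul_dirac_le [PseudoEMetricSpace X] (ν : Measure X) (β : ℝ≥0) (p q : X) :
    W1 (ν + β • Measure.dirac p) (ν + β • Measure.dirac q) ≤ β * edist p q := by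
  have hdiag : Measurable fun x : X => (x, x) := measurable_id.prodMk measurable_id
  let π := ν.map (fun x => (x, x)) + β • Measure.dirac (p, q)
  have hπ : IsCoupling π (ν + β • Measure.dirac p) (ν + β • Measure.dirac q) := by
    constructor
    · rw [Measure.map_add _ _ measurable_fst, Measure.map_smul,
        Measure.map_map measurable_fst hdiag, Measure.map_dirac' measurable_fst,
        Function.comp_def, Measure.map_id']
    · rw [Measure.map_add _ _ measurable_snd, Measure.map_smul,
        Measure.map_map measurable_snd hdiag, Measure.map_dirac' measurable_snd,
        Function.comp_def, Measure.map_id']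
  have hdiag_cost : ∫⁻ x, edist x.1 x.2 ∂(ν.map fun x => (x, x)) = 0 :=
    nonpos_iff_eq_zero.1 <| by
      simpa using lintegral_map_le (fun x : X × X => edist x.1 x.2) (fun x : X => (x, x))
  calc W1 _ _ ≤ ∫⁻ x, edist x.1 x.2 ∂π := iInf₂_le π hπ
    _ = β * edist p q := by
        rw [lintegral_add_measure, hdiag_cost, lintegral_smul_measure, lintegral_dirac, zero_add]
        rfl

variable {ν : Measure X} {β : ℝ≥0} {p q : X}

theorem integral_add_smul_dirac {h : X → ℝ} (hh : Integrable h ν) :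
    ∫ x, h x ∂(ν + β • Measure.dirac p) = ∫ x, h x ∂ν + β * h p := by
  rw [integral_add_measure hh (integrable_dirac enorm_lt_top).smul_measure_nnreal,
    integral_smul_nnreal_measure, integral_dirac, NNReal.smul_def, smul_eq_mul]

theorem lossCVaR_add_le_lossCVaR_add_smul_dirac {α : ℝ} (hα0 : 0 < α) (hα1 : α ≤ 1)
    (hβα : (β : ℝ) ≤ α) [IsProbabilityMeasure (ν + β • Measure.dirac q)] {g : X → ℝ}
    (hg : Integrable g (ν + β • Measure.dirac q))
    (hq : ∀ᵐ x ∂(ν + β • Measure.dirac q), g x ≤ g q) (hqp : g q ≤ g p) :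
    lossCVaR α (ν + β • Measure.dirac q) g + β * (g p - g q) / α
      ≤ lossCVaR α (ν + β • Measure.dirac p) g := by
  set μ := ν + β • Measure.dirac q
  have hplus : ∀ η, Integrable (fun x => max (g x - η) 0) ν := fun η =>
    (hg.sub (integrable_const η)).pos_part.mono_measure (Measure.le_add_right le_rfl)
  have hμ : ∀ η, cvarObjective α μ g η
      = η + 1 / α * (∫ x, max (g x - η) 0 ∂ν + β * max (g q - η) 0) := fun η => by
    rw [cvarObjective, integral_add_smul_dirac (hplus η)]
  have hR : ∀ η, cvarObjective α (ν + β • Measure.dirac p) g η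
      = η + 1 / α * (∫ x, max (g x - η) 0 ∂ν + β * max (g p - η) 0) := fun η => by
    rw [cvarObjective, integral_add_smul_dirac (hplus η)]
  have hμq : lossCVaR α μ g ≤ g q := by
    have h0 : ∫ x, max (g x - g q) 0 ∂μ = 0 :=
      integral_eq_zero_of_ae (hq.mono fun x hx => max_eq_right (sub_nonpos.2 hx))
    simpa [cvarObjective, h0] using lossCVaR_le_cvarObjective hα0 hα1 hg (g q)
  refine le_ciInf fun η => ?_
  rcases le_total η (g q) with hη | hη
  · have hle := lossCVaR_le_cvarObjective hα0 hα1 hg η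
    rw [hμ, max_eq_left (sub_nonneg.2 hη)] at hle
    rw [hR, max_eq_left (sub_nonneg.2 (hη.trans hqp))]
    have hshift : 1 / α * (∫ x, max (g x - η) 0 ∂ν + β * (g p - η))
        = 1 / α * (∫ x, max (g x - η) 0 ∂ν + β * (g q - η)) + β * (g p - g q) / α := by ring
    linarith
  · have hβα' : β / α ≤ 1 := div_le_one_of_le₀ hβα hα0.le
    have hν0 : 0 ≤ ∫ x, max (g x - η) 0 ∂ν := integral_nonneg fun x => le_max_right _ _
    calc lossCVaR α μ g + β * (g p - g q) / α ≤ g q + β * (g p - g q) / α := by linarith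
      _ = η + β * (g p - η) / α - (1 - β / α) * (η - g q) := by field_simp; ring
      _ ≤ η + β * (g p - η) / α :=
          sub_le_self _ (mul_nonneg (sub_nonneg.2 hβα') (sub_nonneg.2 hη))
      _ = η + 1 / α * (0 + β * (g p - η)) := by ring
      _ ≤ cvarObjective α (ν + β • Measure.dirac p) g η := by
          rw [hR]
          gcongr
          exact le_max_left _ _

end MoveAtom

section NormedSpace

variable {E : Type*} [NormedAddCommGroup E] [MeasurableSpace E]

theorem LipschitzWith.integrable_of_lintegral_nnnorm_lt_top [OpensMeasurableSpace E]
    {μ : Measure E} [IsFiniteMeasure μ] (hμ : ∫⁻ x, (‖x‖₊ : ℝ≥0∞) ∂μ < ⊤) {f : E → ℝ}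
    {L : ℝ≥0} (hf : LipschitzWith L f) : Integrable f μ := by
  have hnorm : Integrable (fun x => ‖x‖) μ :=
    ⟨continuous_norm.aestronglyMeasurable,
      by simpa [HasFiniteIntegral, enorm_eq_nnnorm] using hμ⟩
  refine ((hnorm.const_mul L).add (integrable_const ‖f 0‖)).mono'
    hf.continuous.aestronglyMeasurable (ae_of_all _ fun x => ?_)
  have := hf.dist_le_mul x 0
  rw [dist_zero_right] at this
  show ‖f x‖ ≤ L * ‖x‖ + ‖f 0‖
  linarith [norm_le_norm_add_norm_sub' (f x) (f 0), dist_eq_norm (f x) (f 0)]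

theorem lintegral_nnnorm_add_smul_dirac_lt_top [MeasurableSingletonClass E] {ν : Measure E}
    {β : ℝ≥0} {q : E} (hq : ∫⁻ x, (‖x‖₊ : ℝ≥0∞) ∂(ν + β • Measure.dirac q) < ⊤) (p : E) :
    ∫⁻ x, (‖x‖₊ : ℝ≥0∞) ∂(ν + β • Measure.dirac p) < ⊤ := by
  rw [lintegral_add_measure] at hq ⊢
  exact ENNReal.add_lt_top.2 ⟨(ENNReal.add_lt_top.1 hq).1, by
    rw [lintegral_smul_measure, lintegral_dirac, ENNReal.smul_def, smul_eq_mul]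
    exact ENNReal.mul_lt_top ENNReal.coe_lt_top ENNReal.coe_lt_top⟩

end NormedSpace

section InnerProductSpace

variable {E : Type*} [NormedAddCommGroup E] [InnerProductSpace ℝ E]

theorem lipschitzWith_neg_inner_left (w : E) : LipschitzWith ‖w‖₊ fun x => -inner ℝ x w := by
  refine LipschitzWith.of_dist_le_mul fun x y => ?_
  rw [Real.dist_eq, dist_eq_norm, coe_nnnorm, mul_comm, ← abs_neg, neg_sub, sub_neg_eq_add,
    neg_add_eq_sub, ← inner_sub_left]
  exact abs_real_inner_le_norm _ _

theorem exists_norm_le_one_inner_eq_norm (w : E) : ∃ u : E, ‖u‖ ≤ 1 ∧ inner ℝ u w = ‖w‖ := by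
  rcases eq_or_ne w 0 with rfl | hw
  · exact ⟨0, by simp, by simp⟩
  · refine ⟨‖w‖⁻¹ • w, ?_, ?_⟩
    · rw [norm_smul, norm_inv, norm_norm, inv_mul_cancel₀ (norm_ne_zero_iff.2 hw)]
    · rw [real_inner_smul_left, real_inner_self_eq_norm_sq]
      field_simp

end InnerProductSpace

section WorstCase

variable {E : Type*} [NormedAddCommGroup E] [InnerProductSpace ℝ E] [MeasurableSpace E]
  [BorelSpace E]

theorem exists_W1_le_lossCVaR_inner_ge {μ : Measure E} [IsProbabilityMeasure μ]
    (hμ : ∫⁻ x, (‖x‖₊ : ℝ≥0∞) ∂μ < ⊤) {α : ℝ} (hα0 : 0 < α) (hα1 : α ≤ 1) {ε : ℝ}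
    (hε : 0 ≤ ε) (w : E) {q : E} (hq : 0 < μ {q})
    (hmax : ∀ᵐ x ∂μ, -inner ℝ x w ≤ -inner ℝ q w) :
    ∃ R : Measure E, IsProbabilityMeasure R ∧ (∫⁻ x, (‖x‖₊ : ℝ≥0∞) ∂ R) < ⊤ ∧
      W1 R μ ≤ ENNReal.ofReal ε ∧
      lossCVaR α μ (fun x => -inner ℝ x w) + ε / α * ‖w‖
        ≤ lossCVaR α R (fun x => -inner ℝ x w) := by
  set β : ℝ≥0 := min α.toNNReal (μ {q}).toNNReal
  have hβ0 : 0 < β :=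
    lt_min (Real.toNNReal_pos.2 hα0) (ENNReal.toNNReal_pos hq.ne' (measure_ne_top μ _))
  have hβα : (β : ℝ) ≤ α := by simp [β, Real.coe_toNNReal _ hα0.le]
  have hβq : (β : ℝ≥0∞) ≤ μ {q} := by simp [β]
  clear_value β
  obtain ⟨ν, rfl⟩ := exists_eq_add_smul_dirac hβq
  obtain ⟨u, hu, huw⟩ := exists_norm_le_one_inner_eq_norm w
  set p := q - (ε / β) • u
  have hloss : -inner ℝ p w = -inner ℝ q w + ε / β * ‖w‖ := by
    rw [inner_sub_left, real_inner_smul_left, huw]; ring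
  have hdist : edist p q ≤ ENNReal.ofReal (ε / β) := by
    rw [edist_dist, dist_eq_norm, sub_sub_cancel_left, norm_neg, norm_smul,
      Real.norm_of_nonneg (by positivity)]
    exact ENNReal.ofReal_le_ofReal (mul_le_of_le_one_right (by positivity) hu)
  have := isProbabilityMeasure_add_smul_dirac (ν := ν) (β := β) (q := q) p
  have hg := (lipschitzWith_neg_inner_left w).integrable_of_lintegral_nnnorm_lt_top hμ
  refine ⟨ν + β • Measure.dirac p, inferInstance, lintegral_nnnorm_add_smul_dirac_lt_top hμ p,
    ?_, ?_⟩
  · calc W1 _ _ ≤ β * edist p q := W1_add_smul_dirac_le ν β p q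
      _ ≤ ENNReal.ofReal β * ENNReal.ofReal (ε / β) := by
          rw [ENNReal.ofReal_coe_nnreal]; gcongr
      _ = ENNReal.ofReal ε := by
          rw [← ENNReal.ofReal_mul β.coe_nonneg, mul_div_cancel₀ ε (NNReal.coe_pos.2 hβ0).ne']
  · convert lossCVaR_add_le_lossCVaR_add_smul_dirac hα0 hα1 hβα hg hmax
      (by rw [hloss]; exact le_add_of_nonneg_right (by positivity)) using 2
    rw [hloss]
    field_simp
    ring

end WorstCase

section Empirical

variable {K n : ℕ} (r : Fin n → EuclideanSpace ℝ (Fin K))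

theorem isProbabilityMeasure_empiricalMeasure (hn : 0 < n) :
    IsProbabilityMeasure (empiricalMeasure n r) := by
  constructor
  simp [empiricalMeasure,
    ENNReal.inv_mul_cancel (Nat.cast_ne_zero.2 hn.ne') (ENNReal.natCast_ne_top n)]

theorem lintegral_nnnorm_empiricalMeasure_lt_top (hn : 0 < n) :
    ∫⁻ x, (‖x‖₊ : ℝ≥0∞) ∂(empiricalMeasure n r) < ⊤ := by
  rw [empiricalMeasure, lintegral_smul_measure, lintegral_finsetSum_measure]
  simp only [lintegral_dirac, smul_eq_mul]
  exact ENNReal.mul_lt_top (ENNReal.inv_lt_top.2 (Nat.cast_pos.2 hn))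
    (ENNReal.sum_lt_top.2 fun i _ => ENNReal.coe_lt_top)

theorem empiricalMeasure_singleton_pos (i : Fin n) : 0 < empiricalMeasure n r {r i} := by
  simp only [empiricalMeasure, Measure.smul_apply, Measure.coe_finsetSum, Finset.sum_apply,
    smul_eq_mul]
  refine ENNReal.mul_pos (ENNReal.inv_ne_zero.2 (ENNReal.natCast_ne_top n)) (ne_of_gt ?_)
  exact lt_of_lt_of_le (by simp)
    (Finset.single_le_sum (fun j _ => zero_le) (Finset.mem_univ i))

theorem ae_empiricalMeasure {P : EuclideanSpace ℝ (Fin K) → Prop} (hP : ∀ i, P (r i)) :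
    ∀ᵐ x ∂(empiricalMeasure n r), P x := by
  rw [ae_iff]
  simp [empiricalMeasure, Measure.dirac_apply, hP]

end Empirical

theorem stmt_15_general {K : ℕ} (n : ℕ) (hn : 1 ≤ n)
    (r : Fin n → EuclideanSpace ℝ (Fin K))
    (α : ℝ) (hα0 : 0 < α) (hα1 : α < 1) (ε : ℝ) (hε : 0 ≤ ε)
    (w : EuclideanSpace ℝ (Fin K)) :
    sSup {y : ℝ | ∃ R : Measure (EuclideanSpace ℝ (Fin K)),
        IsProbabilityMeasure R ∧ (∫⁻ x, (‖x‖₊ : ℝ≥0∞) ∂ R) < ⊤ ∧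
        W1 R (empiricalMeasure n r) ≤ ENNReal.ofReal ε ∧
        y = CVaR α R w}
      = CVaR α (empiricalMeasure n r) w + (ε / α) * ‖w‖ := by
  simp only [CVaR_eq_lossCVaR]
  have := isProbabilityMeasure_empiricalMeasure r hn
  have hmoment := lintegral_nnnorm_empiricalMeasure_lt_top r hn
  have hlip := lipschitzWith_neg_inner_left w
  have hupper : ∀ R : Measure (EuclideanSpace ℝ (Fin K)), IsProbabilityMeasure R →
      (∫⁻ x, (‖x‖₊ : ℝ≥0∞) ∂ R) < ⊤ → W1 R (empiricalMeasure n r) ≤ ENNReal.ofReal ε →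
      lossCVaR α R (fun x => -inner ℝ x w)
        ≤ lossCVaR α (empiricalMeasure n r) (fun x => -inner ℝ x w) + ε / α * ‖w‖ :=
    fun R _ hR hW =>
      lossCVaR_le_add_of_W1_le hα0 hα1.le hlip (hlip.integrable_of_lintegral_nnnorm_lt_top hR)
        (hlip.integrable_of_lintegral_nnnorm_lt_top hmoment) hε hW
  have : Nonempty (Fin n) := ⟨⟨0, hn⟩⟩
  obtain ⟨i, hi⟩ := Finite.exists_max fun j => -inner ℝ (r j) w
  obtain ⟨R, hR, hRm, hW, hge⟩ := exists_W1_le_lossCVaR_inner_ge hmoment hα0 hα1.le hε w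
    (empiricalMeasure_singleton_pos r i)
    (ae_empiricalMeasure r (P := fun x => -inner ℝ x w ≤ -inner ℝ (r i) w) hi)
  refine IsGreatest.csSup_eq ⟨⟨R, hR, hRm, hW, (le_antisymm (hupper R hR hRm hW) hge).symm⟩, ?_⟩
  rintro y ⟨R, hR, hRm, hW, rfl⟩
  exact hupper R hR hRm hW

theorem stmt_15 {K : ℕ} (hK : 1 ≤ K) (n : ℕ) (hn : 1 ≤ n)
    (r : Fin n → EuclideanSpace ℝ (Fin K))
    (α : ℝ) (hα0 : 0 < α) (hα1 : α < 1) (ε : ℝ) (hε : 0 ≤ ε)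
    (w : EuclideanSpace ℝ (Fin K)) :
    sSup {y : ℝ | ∃ R : Measure (EuclideanSpace ℝ (Fin K)),
        IsProbabilityMeasure R ∧ (∫⁻ x, (‖x‖₊ : ℝ≥0∞) ∂ R) < ⊤ ∧
        W1 R (empiricalMeasure n r) ≤ ENNReal.ofReal ε ∧
        y = CVaR α R w}
      = CVaR α (empiricalMeasure n r) w + (ε / α) * ‖w‖ :=
  stmt_15_general n hn r α hα0 hα1 ε hε w
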